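/- Let m ≥ 1, η : [0,∞) → [0,∞) measurable with support in [0,1], and σ_η = ∫_{ℝ^m} |y_1|² η(|y|) dy. Then for any vectors a, b ∈ ℝ^m, ∫_{B(0,1)} η(|z|) · min{a·z, 0} · (b·z) dz = (σ_η / 2) · (a·b). -/

import Mathlib

/-!
Write `μ = η(|z|) dz`; it is invariant under every linear isometry. Two pairs of vectors with
the same Gram matrix are exchanged by an isometry (a product of two reflections), so
`∫ (c·z)² dμ = |c|² σ` and, by polarization, `∫ (a·z)(b·z) dμ = σ (a·b)`. The substitution
`z ↦ -z` sends `min{a·z, 0}(b·z)` to the complementary part of `(a·z)(b·z)`, which halves the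
integral.

When `σ = ∞` the Bochner integrals on both sides are `0`, so one has to show that
`min{a·z, 0}(b·z)` is not integrable for `a, b ≠ 0`. Its integrability would give that of
`(a·z)(b·z)`, and then of `(a·z)²`: if `a·b ≠ 0`, add the same integrand with `b` reflected in
the line `ℝa`; if `a ⊥ b`, use `x² ≤ 2|xy| + |x² - y²|` and a 45° rotation.
-/

open MeasureTheory
open scoped ENNReal RealInnerProductSpace

theorem min_zero_mul_add_min_neg_zero_mul_neg (x y : ℝ) :
    min x 0 * y + min (-x) 0 * -y = x * y := by
  rcases le_total x 0 with h | h <;> simp [h]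

theorem abs_min_zero_mul_le (x y : ℝ) : |min x 0 * y| ≤ |x * y| := by
  rcases le_total x 0 with h | h
  · simp [h]
  · simpa [h] using abs_nonneg (x * y)

theorem mul_self_le_two_mul_abs_mul_add_abs (x y : ℝ) :
    x * x ≤ 2 * |x * y| + |(x + y) * (x - y)| := by
  rcases le_total (|y|) (|x|) with h | h
  · have hxy : y * y ≤ |x * y| := by
      rw [abs_mul, ← abs_mul_abs_self y]
      exact mul_le_mul_of_nonneg_right h (abs_nonneg y)
    have := le_abs_self ((x + y) * (x - y))
    nlinarith [abs_nonneg (x * y)]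
  · have hxy : x * x ≤ |x * y| := by
      rw [abs_mul, ← abs_mul_abs_self x]
      exact mul_le_mul_of_nonneg_left h (abs_nonneg x)
    nlinarith [abs_nonneg (x * y), abs_nonneg ((x + y) * (x - y))]

theorem MeasureTheory.MeasurePreserving.withDensity_of_comp_eq {X : Type*} [MeasurableSpace X]
    {μ : Measure X} {T : X → X} (hT : MeasurePreserving T μ μ) (hTe : MeasurableEmbedding T)
    {f : X → ℝ≥0∞} (hf : ∀ x, f (T x) = f x) :
    MeasurePreserving T (μ.withDensity f) (μ.withDensity f) := by
  refine ⟨hT.measurable, Measure.ext fun s hs => ?_⟩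
  rw [Measure.map_apply hT.measurable hs, withDensity_apply _ (hT.measurable hs),
    withDensity_apply _ hs, ← hT.setLIntegral_comp_preimage_emb hTe f s]
  simp only [hf]

section IsometryInvariant

variable {E : Type*} [NormedAddCommGroup E] [InnerProductSpace ℝ E]

theorem exists_linearIsometryEquiv_map_pair {p q p' q' : E} (hp : ⟪p, p⟫ = ⟪p', p'⟫)
    (hq : ⟪q, q⟫ = ⟪q', q'⟫) (hpq : ⟪p, q⟫ = ⟪p', q'⟫) :
    ∃ L : E ≃ₗᵢ[ℝ] E, L p = p' ∧ L q = q' := by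
  have norm_eq {x y : E} (h : ⟪x, x⟫ = ⟪y, y⟫) : ‖x‖ = ‖y‖ := by
    rw [norm_eq_sqrt_real_inner, h, ← norm_eq_sqrt_real_inner]
  set R₁ := (ℝ ∙ (p - p'))ᗮ.reflection
  have hR₁ : R₁ p = p' := Submodule.reflection_sub (norm_eq hp)
  set R₂ := (ℝ ∙ (R₁ q - q'))ᗮ.reflection
  have hR₂ : R₂ (R₁ q) = q' := Submodule.reflection_sub (by rw [R₁.norm_map, norm_eq hq])
  have hp' : R₂ p' = p' := by
    refine Submodule.reflection_mem_subspace_eq_self ?_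
    have : ⟪R₁ q, p'⟫ = ⟪q', p'⟫ := calc
      ⟪R₁ q, p'⟫ = ⟪R₁ q, R₁ p⟫ := by rw [hR₁]
      _ = ⟪q', p'⟫ := by rw [R₁.inner_map_map, real_inner_comm, hpq, real_inner_comm]
    rw [Submodule.mem_orthogonal_singleton_iff_inner_right, inner_sub_left, this, sub_self]
  exact ⟨R₁.trans R₂, by simp [hR₁, hp'], by simp [hR₂]⟩

theorem inner_self_eq_inner_norm_smul {e : E} (he : ‖e‖ = 1) (c : E) :
    ⟪c, c⟫ = ⟪‖c‖ • e, ‖c‖ • e⟫ := by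
  rw [real_inner_smul_left, real_inner_smul_right, real_inner_self_eq_norm_sq,
    real_inner_self_eq_norm_sq, he]
  ring

theorem inner_mul_inner_eq_polarization (p q z : E) :
    ⟪p, z⟫ * ⟪q, z⟫ = (⟪p + q, z⟫ * ⟪p + q, z⟫ - ⟪p - q, z⟫ * ⟪p - q, z⟫) / 4 := by
  rw [inner_add_left, inner_sub_left]
  ring

variable [MeasurableSpace E] [BorelSpace E] {μ : Measure E}

def MeasureTheory.Measure.IsIsometryInvariant (μ : Measure E) : Prop :=
  ∀ L : E ≃ₗᵢ[ℝ] E, MeasurePreserving L μ μ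

theorem integrable_inner_mul_inner_iff (hμ : μ.IsIsometryInvariant)
    {p q p' q' : E} (hp : ⟪p, p⟫ = ⟪p', p'⟫) (hq : ⟪q, q⟫ = ⟪q', q'⟫)
    (hpq : ⟪p, q⟫ = ⟪p', q'⟫) :
    Integrable (fun z => ⟪p, z⟫ * ⟪q, z⟫) μ ↔ Integrable (fun z => ⟪p', z⟫ * ⟪q', z⟫) μ := by
  obtain ⟨L, hLp, hLq⟩ := exists_linearIsometryEquiv_map_pair hp hq hpq
  have hcomp : (fun z => ⟪p', z⟫ * ⟪q', z⟫) ∘ L = fun z => ⟪p, z⟫ * ⟪q, z⟫ := by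
    ext z
    simp [← hLp, ← hLq]
  rw [← hcomp, (hμ L).integrable_comp_emb L.toHomeomorph.measurableEmbedding]

theorem integral_inner_mul_inner_eq (hμ : μ.IsIsometryInvariant)
    {p q p' q' : E} (hp : ⟪p, p⟫ = ⟪p', p'⟫) (hq : ⟪q, q⟫ = ⟪q', q'⟫)
    (hpq : ⟪p, q⟫ = ⟪p', q'⟫) :
    ∫ z, ⟪p, z⟫ * ⟪q, z⟫ ∂μ = ∫ z, ⟪p', z⟫ * ⟪q', z⟫ ∂μ := by
  obtain ⟨L, hLp, hLq⟩ := exists_linearIsometryEquiv_map_pair hp hq hpq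
  rw [← (hμ L).integral_comp L.toHomeomorph.measurableEmbedding (fun z => ⟪p', z⟫ * ⟪q', z⟫)]
  simp [← hLp, ← hLq]

theorem integrable_inner_mul_self_iff (hμ : μ.IsIsometryInvariant)
    {e c : E} (he : ‖e‖ = 1) (hc : c ≠ 0) :
    Integrable (fun z => ⟪c, z⟫ * ⟪c, z⟫) μ ↔ Integrable (fun z => ⟪e, z⟫ * ⟪e, z⟫) μ := by
  have hgram := inner_self_eq_inner_norm_smul he c
  rw [integrable_inner_mul_inner_iff hμ hgram hgram hgram]
  have hscale : (fun z => ⟪‖c‖ • e, z⟫ * ⟪‖c‖ • e, z⟫)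
      = fun z => ‖c‖ * ‖c‖ * (⟪e, z⟫ * ⟪e, z⟫) := by
    ext z
    rw [real_inner_smul_left]
    ring
  rw [hscale, integrable_const_mul_iff (mul_self_pos.2 (norm_ne_zero_iff.2 hc)).ne'.isUnit]

theorem integral_inner_mul_self (hμ : μ.IsIsometryInvariant)
    {e : E} (he : ‖e‖ = 1) (c : E) :
    ∫ z, ⟪c, z⟫ * ⟪c, z⟫ ∂μ = ‖c‖ ^ 2 * ∫ z, ⟪e, z⟫ * ⟪e, z⟫ ∂μ := by
  have hgram := inner_self_eq_inner_norm_smul he c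
  rw [integral_inner_mul_inner_eq hμ hgram hgram hgram, ← integral_const_mul]
  simp_rw [real_inner_smul_left]
  ring_nf

theorem integrable_inner_mul_inner (hμ : μ.IsIsometryInvariant)
    {e : E} (he : ‖e‖ = 1) (h : Integrable (fun z => ⟪e, z⟫ * ⟪e, z⟫) μ) (p q : E) :
    Integrable (fun z => ⟪p, z⟫ * ⟪q, z⟫) μ := by
  have hsq (c : E) : Integrable (fun z => ⟪c, z⟫ * ⟪c, z⟫) μ := by
    rcases eq_or_ne c 0 with rfl | hc
    · simp
    · exact (integrable_inner_mul_self_iff hμ he hc).2 h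
  simp_rw [inner_mul_inner_eq_polarization p q]
  exact ((hsq _).sub (hsq _)).div_const 4

theorem integral_inner_mul_inner (hμ : μ.IsIsometryInvariant)
    {e : E} (he : ‖e‖ = 1) (h : Integrable (fun z => ⟪e, z⟫ * ⟪e, z⟫) μ) (p q : E) :
    ∫ z, ⟪p, z⟫ * ⟪q, z⟫ ∂μ = (∫ z, ⟪e, z⟫ * ⟪e, z⟫ ∂μ) * ⟪p, q⟫ := by
  simp_rw [inner_mul_inner_eq_polarization p q]
  rw [integral_div, integral_sub (integrable_inner_mul_inner hμ he h _ _)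
    (integrable_inner_mul_inner hμ he h _ _), integral_inner_mul_self hμ he (p + q),
    integral_inner_mul_self hμ he (p - q), norm_add_sq_real, norm_sub_sq_real]
  ring

theorem integrable_inner_mul_inner_of_integrable_min
    (hμ : μ.IsIsometryInvariant) {a b : E}
    (h : Integrable (fun z => min ⟪a, z⟫ 0 * ⟪b, z⟫) μ) :
    Integrable (fun z => ⟪a, z⟫ * ⟪b, z⟫) μ := by
  set N := LinearIsometryEquiv.neg ℝ (E := E)
  have hN := ((hμ N).integrable_comp_emb N.toHomeomorph.measurableEmbedding).2 h
  refine (h.add hN).congr (ae_of_all _ fun z => ?_)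
  simpa [N, inner_neg_right] using min_zero_mul_add_min_neg_zero_mul_neg ⟪a, z⟫ ⟪b, z⟫

theorem integral_min_inner_mul_inner_of_integrable
    (hμ : μ.IsIsometryInvariant) {a b : E}
    (h : Integrable (fun z => ⟪a, z⟫ * ⟪b, z⟫) μ) :
    ∫ z, min ⟪a, z⟫ 0 * ⟪b, z⟫ ∂μ = (∫ z, ⟪a, z⟫ * ⟪b, z⟫ ∂μ) / 2 := by
  set N := LinearIsometryEquiv.neg ℝ (E := E)
  set f := fun z => min ⟪a, z⟫ 0 * ⟪b, z⟫
  have hf : Integrable f μ :=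
    h.mono (by fun_prop) (ae_of_all _ fun z => abs_min_zero_mul_le _ _)
  have hfN : ∫ z, f (N z) ∂μ = ∫ z, f z ∂μ :=
    (hμ N).integral_comp N.toHomeomorph.measurableEmbedding f
  have hsum : ∫ z, ⟪a, z⟫ * ⟪b, z⟫ ∂μ = ∫ z, f z ∂μ + ∫ z, f (N z) ∂μ := by
    have hfN' : Integrable (fun z => f (N z)) μ :=
      ((hμ N).integrable_comp_emb N.toHomeomorph.measurableEmbedding).2 hf
    rw [← integral_add hf hfN']
    congr with z
    simpa [f, N, inner_neg_right] using (min_zero_mul_add_min_neg_zero_mul_neg ⟪a, z⟫ ⟪b, z⟫).symm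
  rw [hsum, hfN]
  ring

theorem integrable_inner_mul_self_of_inner_ne_zero
    (hμ : μ.IsIsometryInvariant) {a b : E} (hab : ⟪a, b⟫ ≠ 0)
    (h : Integrable (fun z => ⟪a, z⟫ * ⟪b, z⟫) μ) :
    Integrable (fun z => ⟪a, z⟫ * ⟪a, z⟫) μ := by
  set R := (ℝ ∙ a).reflection
  have hRa : R a = a :=
    Submodule.reflection_mem_subspace_eq_self (Submodule.mem_span_singleton_self a)
  have hR : Integrable (fun z => ⟪a, z⟫ * ⟪R b, z⟫) μ := by
    refine (integrable_inner_mul_inner_iff hμ rfl (R.inner_map_map b b).symm ?_).1 h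
    rw [← R.inner_map_map, hRa]
  set c := 2 * (⟪a, b⟫ / ‖a‖ ^ 2)
  have hc : c ≠ 0 := by
    have ha : a ≠ 0 := by
      rintro rfl
      simp at hab
    positivity
  have hbR : b + R b = c • a := by
    rw [Submodule.reflection_singleton_apply]
    module
  refine ((h.add hR).const_mul c⁻¹).congr (ae_of_all _ fun z => ?_)
  simp only [Pi.add_apply]
  rw [← mul_add, ← inner_add_left, hbR, real_inner_smul_left]
  field_simp

theorem integrable_inner_mul_self_of_inner_eq_zero
    (hμ : μ.IsIsometryInvariant) {a b : E} (hb : b ≠ 0) (hab : ⟪a, b⟫ = 0)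
    (h : Integrable (fun z => ⟪a, z⟫ * ⟪b, z⟫) μ) :
    Integrable (fun z => ⟪a, z⟫ * ⟪a, z⟫) μ := by
  set b₁ := (‖a‖ / ‖b‖) • b
  have hb₁ : ⟪b₁, b₁⟫ = ⟪a, a⟫ := by
    rw [real_inner_smul_left, real_inner_smul_right, real_inner_self_eq_norm_sq,
      real_inner_self_eq_norm_sq]
    field_simp
  have hab₁ : ⟪a, b₁⟫ = 0 := by rw [real_inner_smul_right, hab, mul_zero]
  have hb₁a : ⟪b₁, a⟫ = 0 := by rw [real_inner_comm, hab₁]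
  have h₁ : Integrable (fun z => ⟪a, z⟫ * ⟪b₁, z⟫) μ := by
    refine (h.const_mul (‖a‖ / ‖b‖)).congr (ae_of_all _ fun z => ?_)
    simp only [b₁, real_inner_smul_left]
    ring
  have hs : √2 * √2 = 2 := Real.mul_self_sqrt zero_le_two
  -- the pair `(a + b₁, a - b₁)` is `(a, b₁)` rotated by 45° and scaled by `√2`
  have h₂ : Integrable (fun z => ⟪a + b₁, z⟫ * ⟪a - b₁, z⟫) μ := by
    refine (integrable_inner_mul_inner_iff hμ (p := √2 • a) (q := √2 • b₁) ?_ ?_ ?_).1 ?_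
    · simp only [real_inner_smul_left, real_inner_smul_right, inner_add_left, inner_add_right,
        hab₁, hb₁a, hb₁]
      linear_combination ⟪a, a⟫ * hs
    · simp only [real_inner_smul_left, real_inner_smul_right, inner_sub_left, inner_sub_right,
        hab₁, hb₁a, hb₁]
      linear_combination ⟪a, a⟫ * hs
    · simp only [real_inner_smul_left, real_inner_smul_right, inner_add_left, inner_sub_right,
        hab₁, hb₁a, hb₁]
      ring
    · refine (h₁.const_mul 2).congr (ae_of_all _ fun z => ?_)
      simp only [real_inner_smul_left]
      linear_combination (⟪a, z⟫ * ⟪b₁, z⟫) * hs.symm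
  refine ((h₁.abs.const_mul 2).add h₂.abs).mono' (by fun_prop) (ae_of_all _ fun z => ?_)
  simp only [Real.norm_eq_abs, Pi.add_apply, inner_add_left, inner_sub_left,
    abs_mul_self, mul_self_le_two_mul_abs_mul_add_abs]

theorem integrable_inner_mul_self_of_integrable_inner_mul_inner
    (hμ : μ.IsIsometryInvariant) {a b : E} (hb : b ≠ 0)
    (h : Integrable (fun z => ⟪a, z⟫ * ⟪b, z⟫) μ) :
    Integrable (fun z => ⟪a, z⟫ * ⟪a, z⟫) μ := by
  by_cases hab : ⟪a, b⟫ = 0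
  · exact integrable_inner_mul_self_of_inner_eq_zero hμ hb hab h
  · exact integrable_inner_mul_self_of_inner_ne_zero hμ hab h

theorem integral_min_inner_mul_inner (hμ : μ.IsIsometryInvariant)
    {e : E} (he : ‖e‖ = 1) (a b : E) :
    ∫ z, min ⟪a, z⟫ 0 * ⟪b, z⟫ ∂μ = (∫ z, ⟪e, z⟫ * ⟪e, z⟫ ∂μ) / 2 * ⟪a, b⟫ := by
  by_cases h : Integrable (fun z => ⟪e, z⟫ * ⟪e, z⟫) μ
  · rw [integral_min_inner_mul_inner_of_integrable hμ (integrable_inner_mul_inner hμ he h a b),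
      integral_inner_mul_inner hμ he h]
    ring
  rw [integral_undef h, zero_div, zero_mul]
  rcases eq_or_ne a 0 with rfl | ha
  · simp
  rcases eq_or_ne b 0 with rfl | hb
  · simp
  refine integral_undef fun hf => h ?_
  exact (integrable_inner_mul_self_iff hμ he ha).1
    (integrable_inner_mul_self_of_integrable_inner_mul_inner hμ hb
      (integrable_inner_mul_inner_of_integrable_min hμ hf))

end IsometryInvariant

/-- `∫_{B(0,1)} η(|z|) min{a·z, 0} (b·z) dz = (σ_η/2) (a·b)` where
`σ_η = ∫_{ℝ^m} |y_1|² η(|y|) dy`. -/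
theorem stmt5 (m : ℕ) (hm : 0 < m) (η : ℝ → ℝ)
    (hmeas : Measurable η) (hnn : ∀ t, 0 ≤ η t)
    (hsupp : Function.support η ⊆ Set.Icc 0 1)
    (a b : EuclideanSpace ℝ (Fin m)) :
    ∫ z in Metric.closedBall (0 : EuclideanSpace ℝ (Fin m)) 1,
        η ‖z‖ * min ⟪a, z⟫ 0 * ⟪b, z⟫
      = (∫ y : EuclideanSpace ℝ (Fin m), |y ⟨0, hm⟩| ^ 2 * η ‖y‖) / 2
          * ⟪a, b⟫ := by
  set e := EuclideanSpace.single (⟨0, hm⟩ : Fin m) (1 : ℝ)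
  set ν := volume.withDensity fun z : EuclideanSpace ℝ (Fin m) => ENNReal.ofReal (η ‖z‖)
  have hν : ν.IsIsometryInvariant := fun L =>
    L.measurePreserving.withDensity_of_comp_eq L.toHomeomorph.measurableEmbedding
      fun z => by rw [L.norm_map]
  have hweight (F : EuclideanSpace ℝ (Fin m) → ℝ) : ∫ z, F z ∂ν = ∫ z, η ‖z‖ * F z := by
    rw [integral_withDensity_eq_integral_toReal_smul (by fun_prop)
      (ae_of_all _ fun _ => ENNReal.ofReal_lt_top)]
    simp [ENNReal.toReal_ofReal (hnn _)]
  have hball : ∀ z ∉ Metric.closedBall (0 : EuclideanSpace ℝ (Fin m)) 1,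
      η ‖z‖ * min ⟪a, z⟫ 0 * ⟪b, z⟫ = 0 := by
    intro z hz
    have hη : η ‖z‖ = 0 := Function.notMem_support.1 fun hz' => hz (by simpa using (hsupp hz').2)
    rw [hη, zero_mul, zero_mul]
  have key := integral_min_inner_mul_inner hν (by simp [e] : ‖e‖ = 1) a b
  rw [hweight, hweight] at key
  rw [setIntegral_eq_integral_of_forall_compl_eq_zero hball]
  convert key using 3 with z
  · ring
  · simp only [e, EuclideanSpace.inner_single_left, map_one, one_mul, sq_abs]
    congr with z
    ring
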